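/- With the notation of the minimax rejection region R_mm for unit fraction α, if (Z_x, Z_y) is bivariate normal with mean (0, δ_y) and identity covariance, then P((Z_x, Z_y) ∈ R_mm) = α for every real δ_y. Consequently, the test that rejects when (Z_x, Z_y) ∈ R_mm has rejection probability exactly α at every point (δ_x, δ_y) of the composite null hypothesis {(δ_x, δ_y) : δ_x δ_y = 0}, i.e., it is a similar test of level α. -/

import Mathlib

open MeasureTheory ProbabilityTheory Set Filter Pointwise
open scoped ENNReal NNReal Real

/-- The standard normal cumulative distribution function Φ. -/
noncomputable def stdPhi (x : ℝ) : ℝ := ((gaussianReal 0 1) (Set.Iic x)).toReal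

/-- The inverse Φ⁻¹ of the standard normal CDF. -/
noncomputable def stdPhiInv : ℝ → ℝ := Function.invFun stdPhi

/-- The law of (Z_x, Z_y) ~ N((dx, dy), I₂). -/
noncomputable def gauss2 (dx dy : ℝ) : Measure (ℝ × ℝ) :=
  (gaussianReal dx 1).prod (gaussianReal dy 1)


/-- a_k = Φ⁻¹(k·α/2) where α = 1/N. -/
noncomputable def aseq (N k : ℕ) : ℝ := stdPhiInv ((k : ℝ) / (2 * N))

/-- The interval (a_{k-1}, a_k), with a_0 = -∞ and a_{2N} = ∞. -/
noncomputable def band (N k : ℕ) : Set ℝ :=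
  if k = 1 then Set.Iio (aseq N 1)
  else if k = 2 * N then Set.Ioi (aseq N (2 * N - 1))
  else Set.Ioo (aseq N (k - 1)) (aseq N k)

/-- The minimax rejection region R_mm: diagonal and anti-diagonal open squares. -/
noncomputable def Rmm (N : ℕ) : Set (ℝ × ℝ) :=
  (⋃ k ∈ Finset.Icc 1 (2 * N), band N k ×ˢ band N k) ∪
  (⋃ k ∈ Finset.Icc 1 (2 * N), band N k ×ˢ (-(band N k)))

instance gaussNoAtoms (δ : ℝ) : NullSingletonClass (gaussianReal δ 1) :=
  ⟨fun x => (gaussianReal_absolutelyContinuous δ one_ne_zero) (measure_singleton x)⟩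

lemma gauss_Iic_ne_top (δ x : ℝ) : gaussianReal δ 1 (Set.Iic x) ≠ ⊤ :=
  measure_ne_top _ _

lemma stdPhi_ofReal (x : ℝ) : gaussianReal 0 1 (Set.Iic x) = ENNReal.ofReal (stdPhi x) := by
  rw [stdPhi, ENNReal.ofReal_toReal (gauss_Iic_ne_top 0 x)]

lemma stdPhi_nonneg (x : ℝ) : 0 ≤ stdPhi x := ENNReal.toReal_nonneg

lemma stdPhi_le_one (x : ℝ) : stdPhi x ≤ 1 := by
  rw [stdPhi]
  have h := ENNReal.toReal_mono (measure_ne_top _ _) (measure_mono (Set.subset_univ (Set.Iic x)) : gaussianReal 0 1 (Set.Iic x) ≤ gaussianReal 0 1 Set.univ)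
  simpa using h

lemma stdPhi_strictMono : StrictMono stdPhi := by
  intro a b hab
  rw [stdPhi, stdPhi]
  have hsub : gaussianReal 0 1 (Set.Iic a) < gaussianReal 0 1 (Set.Iic b) := by
    have hdecomp : Set.Iic a ∪ Set.Ioc a b = Set.Iic b := Set.Iic_union_Ioc_eq_Iic hab.le
    have hdisj : Disjoint (Set.Iic a) (Set.Ioc a b) := Set.Iic_disjoint_Ioc le_rfl
    have : gaussianReal 0 1 (Set.Iic b)
        = gaussianReal 0 1 (Set.Iic a) + gaussianReal 0 1 (Set.Ioc a b) := by
      rw [← hdecomp, measure_union hdisj measurableSet_Ioc]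
    have hpos : 0 < gaussianReal 0 1 (Set.Ioc a b) := by
      rcases eq_or_lt_of_le (zero_le : 0 ≤ gaussianReal 0 1 (Set.Ioc a b)) with h | h
      · exfalso
        have hv : volume (Set.Ioc a b) = 0 :=
          (gaussianReal_absolutelyContinuous' 0 one_ne_zero) h.symm
        rw [Real.volume_Ioc] at hv
        simp only [ENNReal.ofReal_eq_zero, sub_nonpos] at hv
        exact absurd hv (not_le.mpr hab)
      · exact h
    calc gaussianReal 0 1 (Set.Iic a) < gaussianReal 0 1 (Set.Iic a) + gaussianReal 0 1 (Set.Ioc a b) :=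
          ENNReal.lt_add_right (gauss_Iic_ne_top 0 a) hpos.ne'
      _ = gaussianReal 0 1 (Set.Iic b) := this.symm
  exact ENNReal.toReal_strict_mono (gauss_Iic_ne_top 0 b) hsub

lemma stdPhi_mono : Monotone stdPhi := stdPhi_strictMono.monotone

lemma stdPhi_injective : Function.Injective stdPhi := stdPhi_strictMono.injective

lemma stdPhiInv_stdPhi (x : ℝ) : stdPhiInv (stdPhi x) = x :=
  Function.leftInverse_invFun stdPhi_injective x

lemma gaussianPDFReal_le_one (δ : ℝ) (x : ℝ) : gaussianPDFReal δ 1 x ≤ 1 := by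
  rw [gaussianPDFReal]
  have h1 : (1:ℝ) ≤ √(2 * π * (1:ℝ≥0)) := by
    rw [show ((1:ℝ≥0):ℝ) = 1 by simp, mul_one]
    rw [show (1:ℝ) = √1 by simp]
    apply Real.sqrt_le_sqrt
    nlinarith [Real.pi_gt_three]
  have h2 : (√(2 * π * (1:ℝ≥0)))⁻¹ ≤ 1 := by
    apply inv_le_one_of_one_le₀ h1
  have h3 : Real.exp (- (x - δ)^2 / (2 * (1:ℝ≥0))) ≤ 1 := by
    rw [Real.exp_le_one_iff]
    have : (0:ℝ) < 2 * (1:ℝ≥0) := by norm_num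
    apply div_nonpos_of_nonpos_of_nonneg
    · simp [sq_nonneg]
    · positivity
  calc (√(2 * π * (1:ℝ≥0)))⁻¹ * Real.exp (- (x - δ)^2 / (2 * (1:ℝ≥0))) ≤ 1 * 1 := by
        apply mul_le_mul h2 h3 (Real.exp_nonneg _) zero_le_one
    _ = 1 := by norm_num

lemma gauss_Ioc (δ a b : ℝ) (hab : a ≤ b) :
    gaussianReal δ 1 (Set.Ioc a b) ≤ ENNReal.ofReal (b - a) := by
  rw [gaussianReal_apply_eq_integral δ one_ne_zero]
  apply ENNReal.ofReal_le_ofReal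
  have h := norm_setIntegral_le_of_norm_le_const (μ := volume) (s := Set.Ioc a b)
      (f := gaussianPDFReal δ 1) (C := 1)
      (by rw [Real.volume_Ioc]; exact ENNReal.ofReal_lt_top)
      (fun x _ => by
        rw [Real.norm_eq_abs, abs_of_nonneg (gaussianPDFReal_nonneg _ _ _)]
        exact gaussianPDFReal_le_one δ x)
  rw [measureReal_def, Real.volume_Ioc, ENNReal.toReal_ofReal (by linarith), one_mul] at h
  calc ∫ x in Set.Ioc a b, gaussianPDFReal δ 1 x
      ≤ ‖∫ x in Set.Ioc a b, gaussianPDFReal δ 1 x‖ := le_abs_self _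
    _ ≤ b - a := h

lemma stdPhi_lipschitz : LipschitzWith 1 stdPhi := by
  apply LipschitzWith.of_dist_le_mul
  intro x y
  wlog hxy : y ≤ x generalizing x y
  · rw [dist_comm (stdPhi x), dist_comm x]; exact this y x (le_of_not_ge hxy)
  rw [Real.dist_eq, Real.dist_eq, abs_of_nonneg (sub_nonneg.mpr (stdPhi_mono hxy)),
    abs_of_nonneg (sub_nonneg.mpr hxy), NNReal.coe_one, one_mul]
  have hdecomp : Set.Iic y ∪ Set.Ioc y x = Set.Iic x := Set.Iic_union_Ioc_eq_Iic hxy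
  have : gaussianReal 0 1 (Set.Iic x)
      = gaussianReal 0 1 (Set.Iic y) + gaussianReal 0 1 (Set.Ioc y x) := by
    rw [← hdecomp, measure_union (Set.Iic_disjoint_Ioc le_rfl) measurableSet_Ioc]
  rw [stdPhi, stdPhi, this, ENNReal.toReal_add (measure_ne_top _ _) (measure_ne_top _ _)]
  have h2 : (gaussianReal 0 1 (Set.Ioc y x)).toReal ≤ x - y := by
    have := gauss_Ioc 0 y x hxy
    calc (gaussianReal 0 1 (Set.Ioc y x)).toReal
        ≤ (ENNReal.ofReal (x - y)).toReal := ENNReal.toReal_mono (by simp) this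
      _ = x - y := ENNReal.toReal_ofReal (by linarith)
  linarith

lemma stdPhi_continuous : Continuous stdPhi := stdPhi_lipschitz.continuous

lemma stdPhi_tendsto_atTop : Tendsto stdPhi atTop (nhds 1) := by
  have h := tendsto_measure_Iic_atTop (gaussianReal 0 1)
  rw [measure_univ] at h
  have h2 := (ENNReal.tendsto_toReal (by simp : (1:ℝ≥0∞) ≠ ⊤)).comp h
  exact h2

lemma gauss_map_neg : (gaussianReal 0 1).map (fun x => -x) = gaussianReal 0 1 := by
  have h := gaussianReal_map_const_mul (μ := 0) (v := 1) (-1)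
  have hv : (.mk ((-1:ℝ)^2) (sq_nonneg _) : ℝ≥0) * 1 = 1 := by
    ext; norm_num
  rw [hv] at h
  simpa [neg_one_mul] using h

lemma stdPhi_neg (x : ℝ) : stdPhi (-x) = 1 - stdPhi x := by
  have hIci : gaussianReal 0 1 (Set.Iic (-x)) = gaussianReal 0 1 (Set.Ici x) := by
    conv_rhs => rw [← gauss_map_neg]
    rw [Measure.map_apply measurable_neg measurableSet_Ici]
    congr 1
    ext t
    simp
  have hsplit : gaussianReal 0 1 (Set.Ici x) = 1 - gaussianReal 0 1 (Set.Iio x) := by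
    rw [← measure_univ (μ := gaussianReal 0 1), ← Set.Iio_union_Ici (a := x),
      measure_union (Set.Iio_disjoint_Ici le_rfl) measurableSet_Ici]
    rw [ENNReal.add_sub_cancel_left (measure_ne_top _ _)]
  have hIio : gaussianReal 0 1 (Set.Iio x) = gaussianReal 0 1 (Set.Iic x) :=
    measure_congr (Iio_ae_eq_Iic)
  rw [stdPhi, stdPhi, hIci, hsplit, hIio, ENNReal.toReal_sub_of_le
    (measure_mono (Set.subset_univ _) |>.trans_eq (measure_univ)) (by simp)]
  simp

lemma stdPhi_zero : stdPhi 0 = 1/2 := by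
  have h := stdPhi_neg 0
  rw [neg_zero] at h
  linarith

lemma stdPhi_surj {p : ℝ} (hp0 : 0 < p) (hp1 : p < 1) : ∃ x, stdPhi x = p := by
  obtain ⟨b, hb⟩ : ∃ b, max p (1 - p) < stdPhi b := by
    have hmax : max p (1 - p) < 1 := by
      rw [max_lt_iff]; constructor <;> linarith
    exact (stdPhi_tendsto_atTop.eventually (eventually_gt_nhds hmax)).exists
  have hlow : stdPhi (-b) < p := by
    rw [stdPhi_neg]
    have := lt_of_le_of_lt (le_max_right p (1-p)) hb
    linarith
  have hhigh : p < stdPhi b := lt_of_le_of_lt (le_max_left _ _) hb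
  have hmem : p ∈ Set.Icc (stdPhi (-b)) (stdPhi b) := ⟨hlow.le, hhigh.le⟩
  have := intermediate_value_Icc ((stdPhi_strictMono.lt_iff_lt.mp (hlow.trans hhigh)).le)
    stdPhi_continuous.continuousOn
  obtain ⟨x, _, hx⟩ := this hmem
  exact ⟨x, hx⟩



lemma stdPhi_aseq {N k : ℕ} (hN : 0 < N) (hk1 : 1 ≤ k) (hk : k ≤ 2 * N - 1) :
    stdPhi (aseq N k) = (k : ℝ) / (2 * N) := by
  have hklt : k < 2 * N := by omega
  have h0 : (0:ℝ) < (k : ℝ) / (2 * N) := by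
    apply div_pos (by exact_mod_cast hk1) (by positivity)
  have h1 : (k : ℝ) / (2 * N) < 1 := by
    rw [div_lt_one (by positivity)]
    exact_mod_cast hklt
  exact Function.invFun_eq (stdPhi_surj h0 h1)

lemma aseq_le {N j k : ℕ} (hN : 0 < N) (hj1 : 1 ≤ j) (hjk : j ≤ k) (hk : k ≤ 2 * N - 1) :
    aseq N j ≤ aseq N k := by
  rw [← stdPhi_strictMono.le_iff_le, stdPhi_aseq hN hj1 (hjk.trans hk),
    stdPhi_aseq hN (hj1.trans hjk) hk]
  gcongr

lemma aseq_N_eq_zero {N : ℕ} (hN : 0 < N) : aseq N N = 0 := by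
  apply stdPhi_injective
  rw [stdPhi_aseq hN hN (by omega), stdPhi_zero]
  have : (N:ℝ) ≠ 0 := Nat.cast_ne_zero.mpr hN.ne'
  field_simp

lemma aseq_reflect {N k : ℕ} (hN : 0 < N) (hk1 : 1 ≤ k) (hk : k ≤ 2 * N - 1) :
    aseq N (2 * N - k) = -(aseq N k) := by
  apply stdPhi_injective
  rw [stdPhi_aseq hN (by omega) (by omega), stdPhi_neg, stdPhi_aseq hN hk1 hk]
  have h2N : (0:ℝ) < 2 * N := by positivity
  rw [Nat.cast_sub (by omega)]
  push_cast
  field_simp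

lemma band_measurable (N k : ℕ) : MeasurableSet (band N k) := by
  rw [band]
  split_ifs
  · exact measurableSet_Iio
  · exact measurableSet_Ioi
  · exact measurableSet_Ioo

lemma band_bounds {N k : ℕ} (hk1 : 1 ≤ k) (hk : k ≤ 2 * N) {x : ℝ} (hx : x ∈ band N k) :
    (k < 2 * N → x < aseq N k) ∧ (1 < k → aseq N (k - 1) < x) := by
  rw [band] at hx
  split_ifs at hx with h1 h2
  · subst h1
    exact ⟨fun _ => hx, fun h => absurd h (by omega)⟩
  · exact ⟨fun h => absurd h (by omega), fun _ => by subst h2; exact hx⟩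
  · exact ⟨fun _ => hx.2, fun _ => hx.1⟩

lemma band_disjoint {N j k : ℕ} (hN : 0 < N) (hj1 : 1 ≤ j) (hk : k ≤ 2 * N) (hjk : j < k) :
    Disjoint (band N j) (band N k) := by
  rw [Set.disjoint_left]
  intro x hxj hxk
  have h1 := (band_bounds hj1 (by omega) hxj).1 (by omega)
  have h2 := (band_bounds (by omega) hk hxk).2 (by omega)
  have h3 : aseq N j ≤ aseq N (k - 1) := aseq_le hN hj1 (by omega) (by omega)
  linarith

lemma band_subset_Iio {N k : ℕ} (hN : 0 < N) (hk1 : 1 ≤ k) (hk : k ≤ N) :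
    band N k ⊆ Set.Iio 0 := by
  intro x hx
  have h1 := (band_bounds hk1 (by omega) hx).1 (by omega)
  have h2 : aseq N k ≤ aseq N N := aseq_le hN hk1 hk (by omega)
  rw [aseq_N_eq_zero hN] at h2
  exact lt_of_lt_of_le h1 h2

lemma band_subset_Ioi {N k : ℕ} (hN : 0 < N) (hk1 : N < k) (hk : k ≤ 2 * N) :
    band N k ⊆ Set.Ioi 0 := by
  intro x hx
  have h1 := (band_bounds (by omega) hk hx).2 (by omega)
  have h2 : aseq N N ≤ aseq N (k - 1) := aseq_le hN hN (by omega) (by omega)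
  rw [aseq_N_eq_zero hN] at h2
  exact lt_of_le_of_lt h2 h1

lemma band_neg_disjoint {N k : ℕ} (hN : 0 < N) (hk1 : 1 ≤ k) (hk : k ≤ 2 * N) :
    Disjoint (band N k) (-(band N k)) := by
  rcases le_or_gt k N with h | h
  · have h1 := band_subset_Iio hN hk1 h
    refine Set.disjoint_left.mpr fun x hx hnx => ?_
    have : -x ∈ band N k := Set.mem_neg.mp hnx
    have := h1 this
    have := h1 hx
    simp only [Set.mem_Iio] at *
    linarith
  · have h1 := band_subset_Ioi hN h hk
    refine Set.disjoint_left.mpr fun x hx hnx => ?_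
    have : -x ∈ band N k := Set.mem_neg.mp hnx
    have := h1 this
    have := h1 hx
    simp only [Set.mem_Ioi] at *
    linarith

lemma band_one (N : ℕ) : band N 1 = Set.Iio (aseq N 1) := by rw [band]; simp

lemma band_last {N : ℕ} (hN : 0 < N) : band N (2 * N) = Set.Ioi (aseq N (2 * N - 1)) := by
  rw [band, if_neg (by omega), if_pos rfl]

lemma band_mid {N k : ℕ} (hk1 : 1 < k) (hk : k < 2 * N) :
    band N k = Set.Ioo (aseq N (k - 1)) (aseq N k) := by
  rw [band, if_neg (by omega), if_neg (by omega)]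

lemma band_cover {N : ℕ} (hN : 0 < N) {x : ℝ}
    (hx : ∀ k, 1 ≤ k → k ≤ 2 * N - 1 → x ≠ aseq N k) :
    ∃ k, 1 ≤ k ∧ k ≤ 2 * N ∧ x ∈ band N k := by
  by_cases hlast : aseq N (2 * N - 1) < x
  · exact ⟨2 * N, by omega, le_rfl, by rw [band_last hN]; exact hlast⟩
  · have hlt : x < aseq N (2 * N - 1) :=
      lt_of_le_of_ne (not_lt.mp hlast) (hx (2 * N - 1) (by omega) le_rfl)
    set s := (Finset.Icc 1 (2 * N - 1)).filter (fun k => x < aseq N k) with hs_def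
    have hmem : ∀ k, k ∈ s ↔ (1 ≤ k ∧ k ≤ 2 * N - 1) ∧ x < aseq N k := by
      intro k
      simp [hs_def, Finset.mem_filter, Finset.mem_Icc]
    have hs : s.Nonempty := ⟨2 * N - 1, (hmem _).mpr ⟨⟨by omega, le_rfl⟩, hlt⟩⟩
    set k := s.min' hs with hk_def
    obtain ⟨⟨hk1, hk2⟩, hkx⟩ := (hmem k).mp (s.min'_mem hs)
    by_cases hone : k = 1
    · exact ⟨1, le_rfl, by omega, by rw [band_one]; rw [hone] at hkx; exact hkx⟩
    · have hnot : k - 1 ∉ s := fun hin => by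
        have := s.min'_le _ hin
        omega
      have hle : aseq N (k - 1) ≤ x := by
        by_contra hcon
        exact hnot ((hmem _).mpr ⟨⟨by omega, by omega⟩, not_le.mp hcon⟩)
      have hne : aseq N (k - 1) < x :=
        lt_of_le_of_ne hle (fun h => hx (k - 1) (by omega) (by omega) h.symm)
      exact ⟨k, hk1, by omega, by rw [band_mid (by omega) (by omega)]; exact ⟨hne, hkx⟩⟩

lemma band_neg {N k : ℕ} (hN : 0 < N) (hk1 : 1 ≤ k) (hk : k ≤ 2 * N) :
    -(band N k) = band N (2 * N + 1 - k) := by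
  by_cases hone : k = 1
  · subst hone
    rw [band_one, show 2 * N + 1 - 1 = 2 * N by omega, band_last hN,
      Set.neg_Iio, aseq_reflect hN le_rfl (by omega)]
  · by_cases hlast : k = 2 * N
    · subst hlast
      have e1 : -aseq N (2 * N - 1) = aseq N 1 := by
        have h := aseq_reflect (k := 2 * N - 1) hN (by omega) (by omega)
        rw [show 2 * N - (2 * N - 1) = 1 by omega] at h
        linarith
      rw [band_last hN, show 2 * N + 1 - 2 * N = 1 by omega, band_one, Set.neg_Ioi, e1]
    · have e1 : -aseq N k = aseq N (2 * N + 1 - k - 1) := by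
        have h := aseq_reflect (k := k) hN (by omega) (by omega)
        rw [show 2 * N - k = 2 * N + 1 - k - 1 by omega] at h
        linarith
      have e2 : -aseq N (k - 1) = aseq N (2 * N + 1 - k) := by
        have h := aseq_reflect (k := k - 1) hN (by omega) (by omega)
        rw [show 2 * N - (k - 1) = 2 * N + 1 - k by omega] at h
        linarith
      rw [band_mid (by omega) (by omega), band_mid (by omega) (by omega), Set.neg_Ioo, e1, e2]

lemma gauss0_band {N k : ℕ} (hN : 0 < N) (hk1 : 1 ≤ k) (hk : k ≤ 2 * N) :
    gaussianReal 0 1 (band N k) = ENNReal.ofReal (1 / (2 * N)) := by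
  have h2N : (0:ℝ) < 2 * (N:ℝ) := by positivity
  by_cases hone : k = 1
  · subst hone
    rw [band_one, measure_congr Iio_ae_eq_Iic, stdPhi_ofReal, stdPhi_aseq hN le_rfl (by omega)]
    norm_num
  · by_cases hlast : k = 2 * N
    · subst hlast
      rw [band_last hN, ← Set.compl_Iic, measure_compl measurableSet_Iic (measure_ne_top _ _),
        measure_univ, stdPhi_ofReal, stdPhi_aseq hN (by omega) le_rfl]
      rw [← ENNReal.ofReal_one, ← ENNReal.ofReal_sub _ (by positivity)]
      congr 1
      rw [Nat.cast_sub (by omega)]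
      push_cast
      field_simp
      ring
    · rw [band_mid (by omega) (by omega), measure_congr Ioo_ae_eq_Ioc]
      have hsplit : gaussianReal 0 1 (Set.Iic (aseq N k))
          = gaussianReal 0 1 (Set.Iic (aseq N (k - 1))) + gaussianReal 0 1 (Set.Ioc (aseq N (k - 1)) (aseq N k)) := by
        rw [← measure_union (Set.Iic_disjoint_Ioc le_rfl) measurableSet_Ioc,
          Set.Iic_union_Ioc_eq_Iic (aseq_le hN (by omega) (by omega) (by omega))]
      have htr : (gaussianReal 0 1 (Set.Ioc (aseq N (k - 1)) (aseq N k))).toReal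
          = 1 / (2 * N) := by
        have := congrArg ENNReal.toReal hsplit
        rw [ENNReal.toReal_add (measure_ne_top _ _) (measure_ne_top _ _)] at this
        have e1 : (gaussianReal 0 1 (Set.Iic (aseq N k))).toReal = (k:ℝ) / (2*N) :=
          stdPhi_aseq hN hk1 (by omega)
        have e2 : (gaussianReal 0 1 (Set.Iic (aseq N (k-1)))).toReal = ((k-1:ℕ):ℝ) / (2*N) :=
          stdPhi_aseq hN (by omega) (by omega)
        rw [e1, e2, Nat.cast_sub (by omega)] at this
        push_cast at this
        have : (gaussianReal 0 1 (Set.Ioc (aseq N (k - 1)) (aseq N k))).toReal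
            = (k:ℝ)/(2*N) - ((k:ℝ)-1)/(2*N) := by linarith
        rw [this]
        field_simp
        ring
      rw [← htr, ENNReal.ofReal_toReal (measure_ne_top _ _)]

lemma gauss_sum_bands (δ : ℝ) {N : ℕ} (hN : 0 < N) :
    ∑ k ∈ Finset.Icc 1 (2 * N), gaussianReal δ 1 (band N k) = 1 := by
  rw [← measure_biUnion_finset ?_ (fun k _ => band_measurable N k)]
  · -- union has measure 1
    set A := ⋃ k ∈ Finset.Icc 1 (2 * N), band N k with hA
    set Bad := ⋃ k ∈ Finset.Icc 1 (2 * N - 1), {aseq N k} with hBad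
    have hBadnull : gaussianReal δ 1 Bad = 0 := by
      rw [hBad]
      apply measure_biUnion_null_iff (Finset.countable_toSet _) |>.mpr
      intro k _
      exact measure_singleton _
    have hcov : Set.univ ⊆ A ∪ Bad := by
      intro x _
      by_cases hxB : x ∈ Bad
      · exact Or.inr hxB
      · left
        have hx : ∀ k, 1 ≤ k → k ≤ 2 * N - 1 → x ≠ aseq N k := by
          intro k h1 h2 heq
          exact hxB (Set.mem_biUnion (Finset.mem_Icc.mpr ⟨h1, h2⟩) (by simp [heq]))
        obtain ⟨k, h1, h2, h3⟩ := band_cover hN hx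
        exact Set.mem_biUnion (Finset.mem_Icc.mpr ⟨h1, h2⟩) h3
    have hle : (1:ℝ≥0∞) ≤ gaussianReal δ 1 A := by
      calc (1:ℝ≥0∞) = gaussianReal δ 1 Set.univ := (measure_univ).symm
        _ ≤ gaussianReal δ 1 (A ∪ Bad) := measure_mono hcov
        _ ≤ gaussianReal δ 1 A + gaussianReal δ 1 Bad := measure_union_le _ _
        _ = gaussianReal δ 1 A := by rw [hBadnull, add_zero]
    exact le_antisymm prob_le_one hle
  · intro j hj k hk hjk
    simp only [Finset.coe_Icc, Set.mem_Icc] at hj hk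
    rcases lt_or_gt_of_ne hjk with h | h
    · exact band_disjoint hN hj.1 hk.2 h
    · exact (band_disjoint hN hk.1 hj.2 h).symm

lemma gauss_sum_neg_bands (δ : ℝ) {N : ℕ} (hN : 0 < N) :
    ∑ k ∈ Finset.Icc 1 (2 * N), gaussianReal δ 1 (-(band N k)) = 1 := by
  have h : ∀ k ∈ Finset.Icc 1 (2 * N),
      gaussianReal δ 1 (-(band N k)) = gaussianReal δ 1 (band N (2 * N + 1 - k)) := by
    intro k hk
    rw [Finset.mem_Icc] at hk
    rw [band_neg hN hk.1 hk.2]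
  rw [Finset.sum_congr rfl h, ← gauss_sum_bands δ hN]
  refine Finset.sum_nbij' (fun k => 2 * N + 1 - k) (fun k => 2 * N + 1 - k)
    ?_ ?_ ?_ ?_ ?_ <;> intro k hk <;> simp only [Finset.mem_Icc] at * <;>
    first
      | omega
      | (show 2 * N + 1 - (2 * N + 1 - k) = k; omega)
      | rfl


lemma Rmm_eq (N : ℕ) :
    Rmm N = ⋃ k ∈ Finset.Icc 1 (2 * N), band N k ×ˢ (band N k ∪ -(band N k)) := by
  ext ⟨x, y⟩
  simp only [Rmm, Set.mem_union, Set.mem_iUnion, Set.mem_prod, Set.mem_union]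
  constructor
  · rintro (⟨k, hk, hx, hy⟩ | ⟨k, hk, hx, hy⟩)
    · exact ⟨k, hk, hx, Or.inl hy⟩
    · exact ⟨k, hk, hx, Or.inr hy⟩
  · rintro ⟨k, hk, hx, hy | hy⟩
    · exact Or.inl ⟨k, hk, hx, hy⟩
    · exact Or.inr ⟨k, hk, hx, hy⟩

lemma Rmm_measurable (N : ℕ) : MeasurableSet (Rmm N) := by
  rw [Rmm_eq]
  apply MeasurableSet.biUnion (Finset.countable_toSet _)
  intro k _
  exact (band_measurable N k).prod ((band_measurable N k).union (band_measurable N k).neg)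

lemma main_measure (δy : ℝ) {N : ℕ} (hN : 0 < N) :
    (gaussianReal 0 1).prod (gaussianReal δy 1) (Rmm N) = ENNReal.ofReal (1 / (N : ℝ)) := by
  rw [Rmm_eq, measure_biUnion_finset ?_ ?_]
  · have hterm : ∀ k ∈ Finset.Icc 1 (2 * N),
        (gaussianReal 0 1).prod (gaussianReal δy 1) (band N k ×ˢ (band N k ∪ -(band N k)))
          = ENNReal.ofReal (1 / (2 * N)) *
            (gaussianReal δy 1 (band N k) + gaussianReal δy 1 (-(band N k))) := by
      intro k hk
      rw [Finset.mem_Icc] at hk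
      rw [Measure.prod_prod, gauss0_band hN hk.1 hk.2,
        measure_union (band_neg_disjoint hN hk.1 hk.2) (band_measurable N k).neg]
    rw [Finset.sum_congr rfl hterm, ← Finset.mul_sum, Finset.sum_add_distrib,
      gauss_sum_bands δy hN, gauss_sum_neg_bands δy hN]
    have h2 : ((1:ℝ≥0∞) + 1) = ENNReal.ofReal 2 := by norm_num
    rw [h2, ← ENNReal.ofReal_mul (by positivity)]
    congr 1
    have : (N:ℝ) ≠ 0 := Nat.cast_ne_zero.mpr hN.ne'
    field_simp
  · intro j hj k hk hjk
    simp only [Finset.coe_Icc, Set.mem_Icc] at hj hk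
    have hd : Disjoint (band N j) (band N k) := by
      rcases lt_or_gt_of_ne hjk with h | h
      · exact band_disjoint hN hj.1 hk.2 h
      · exact (band_disjoint hN hk.1 hj.2 h).symm
    exact Set.Disjoint.set_prod_left hd _ _
  · intro k _
    exact (band_measurable N k).prod ((band_measurable N k).union (band_measurable N k).neg)

lemma Rmm_mem_symm {N : ℕ} (hN : 0 < N) {x y : ℝ} (h : (y, x) ∈ Rmm N) : (x, y) ∈ Rmm N := by
  simp only [Rmm, Set.mem_union, Set.mem_iUnion, Set.mem_prod] at h ⊢
  rcases h with ⟨k, hk, hy, hx⟩ | ⟨k, hk, hy, hx⟩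
  · exact Or.inl ⟨k, hk, hx, hy⟩
  · right
    rw [Finset.mem_Icc] at hk
    refine ⟨2 * N + 1 - k, Finset.mem_Icc.mpr ⟨by omega, by omega⟩, ?_, ?_⟩
    · rw [← band_neg hN hk.1 hk.2]
      exact hx
    · rw [band_neg hN (by omega) (by omega), show 2 * N + 1 - (2 * N + 1 - k) = k by omega]
      exact hy

lemma Rmm_swap {N : ℕ} (hN : 0 < N) : Prod.swap ⁻¹' Rmm N = Rmm N := by
  ext ⟨x, y⟩
  simp only [Set.mem_preimage, Prod.swap_prod_mk]
  exact ⟨fun h => Rmm_mem_symm hN h, fun h => Rmm_mem_symm hN h⟩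


/-- For unit fraction α = 1/N: P((Z_x, Z_y) ∈ R_mm) = α when (Z_x, Z_y) ~ N((0, δ_y), I₂)
for every δ_y, and consequently the test with rejection region R_mm is a similar test:
its rejection probability is exactly α at every point of the null {δ_x δ_y = 0}. -/
theorem stmt1 (N : ℕ) (hN : 0 < N) :
    (∀ δy : ℝ, ((gauss2 0 δy) (Rmm N)).toReal = 1 / (N : ℝ)) ∧
    (∀ δx δy : ℝ, δx * δy = 0 → ((gauss2 δx δy) (Rmm N)).toReal = 1 / (N : ℝ)) := by
  have hNR : (0:ℝ) < N := Nat.cast_pos.mpr hN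
  have part1 : ∀ δy : ℝ, ((gauss2 0 δy) (Rmm N)).toReal = 1 / (N : ℝ) := by
    intro δy
    rw [gauss2, main_measure δy hN, ENNReal.toReal_ofReal (by positivity)]
  refine ⟨part1, fun δx δy h => ?_⟩
  rcases mul_eq_zero.mp h with h0 | h0
  · subst h0; exact part1 δy
  · subst h0
    have hswap : (gaussianReal δx 1).prod (gaussianReal 0 1)
        = Measure.map Prod.swap ((gaussianReal 0 1).prod (gaussianReal δx 1)) :=
      Measure.prod_swap.symm
    rw [gauss2, hswap, Measure.map_apply measurable_swap (Rmm_measurable N), Rmm_swap hN,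
      main_measure δx hN, ENNReal.toReal_ofReal (by positivity)]
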